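/- arXiv:2512.19572 — 3 statements merged into one kernel-verified Lean document; each statement's English description precedes it below -/
import Mathlib

section
/- Let 𝒜 denote the set of probability measures μ on Ω with μ(X_j) = M_j for every j = 1,…,K. For each j let X*_j be a measurable subset of Ω with X*_j ⊆ X_j. Then the infimum over μ ∈ 𝒜 of the sum Σ_{j=1}^K μ(X*_j) equals the sum of the infima: inf_{μ∈𝒜} Σ_{j=1}^K μ(X*_j) = Σ_{j=1}^K inf_{μ∈𝒜} μ(X*_j). -/
open MeasureTheory Set Function
open scoped ENNReal

theorem IsMinOn.biInf_eq {α β : Type*} [CompleteLattice α] {f : β → α} {S : Set β} {a : β}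
    (ha : a ∈ S) (h : IsMinOn f S a) : ⨅ b ∈ S, f b = f a :=
  (biInf_le f ha).antisymm (le_iInf₂ h)

theorem Finset.biInf_sum_eq_sum_biInf_of_isMinOn {ι β α : Type*} [CompleteLattice α]
    [AddCommMonoid α] [IsOrderedAddMonoid α] (s : Finset ι) {f : ι → β → α} {S : Set β}
    {a : β} (ha : a ∈ S) (h : ∀ i ∈ s, IsMinOn (f i) S a) :
    ⨅ b ∈ S, ∑ i ∈ s, f i b = ∑ i ∈ s, ⨅ b ∈ S, f i b := by
  have hsum : IsMinOn (fun b => ∑ i ∈ s, f i b) S a := isMinOn_iff.2 fun b hb =>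
    Finset.sum_le_sum fun i hi => isMinOn_iff.1 (h i hi) b hb
  rw [hsum.biInf_eq ha]
  exact Finset.sum_congr rfl fun i hi => ((h i hi).biInf_eq ha).symm

theorem Set.Nonempty.exists_mem_imp_subset {α : Type*} {s : Set α} (hs : s.Nonempty)
    (t : Set α) : ∃ x ∈ s, x ∈ t → s ⊆ t := by
  by_cases hst : s ⊆ t
  · exact hs.imp fun x hx => ⟨hx, fun _ => hst⟩
  · obtain ⟨x, hxs, hxt⟩ := not_subset.1 hst
    exact ⟨x, hxs, fun h => absurd h hxt⟩

namespace MeasureTheory.Measure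

variable {Ω ι : Type*} [MeasurableSpace Ω]

theorem sum_smul_dirac_apply_of_subset {X : ι → Set Ω} (hX : Pairwise (Disjoint on X))
    {x : ι → Ω} (hx : ∀ j, x j ∈ X j) (w : ι → ℝ≥0∞) {s : Set Ω} (hs : MeasurableSet s)
    {i : ι} (hsi : s ⊆ X i) :
    Measure.sum (fun j => w j • dirac (x j)) s = s.indicator (fun _ => w i) (x i) := by
  rw [sum_apply _ hs, tsum_eq_single i fun j hji => ?_]
  · by_cases h : x i ∈ s <;> simp [dirac_apply' _ hs, h]
  · have : x j ∉ s := fun h => (hX hji).notMem_of_mem_left (hx j) (hsi h)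
    simp [dirac_apply' _ hs, this]

theorem sum_smul_dirac_apply_univ (x : ι → Ω) (w : ι → ℝ≥0∞) :
    Measure.sum (fun j => w j • dirac (x j)) univ = ∑' j, w j := by
  simp [sum_apply _ MeasurableSet.univ]

end MeasureTheory.Measure

theorem inf_sum_eq_sum_inf_general
    {Ω : Type*} [MeasurableSpace Ω]
    (K : ℕ)
    (X : Fin K → Set Ω)
    (hXne : ∀ j, (X j).Nonempty)
    (hXmeas : ∀ j, MeasurableSet (X j))
    (hXdisj : Pairwise (Function.onFun Disjoint X))
    (M : Fin K → ℝ) (hM0 : ∀ j, 0 ≤ M j) (hM1 : ∑ j, M j = 1)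
    (Xs : Fin K → Set Ω)
    (hXsmeas : ∀ j, MeasurableSet (Xs j))
    (hXssub : ∀ j, Xs j ⊆ X j) :
    (⨅ μ ∈ {μ : Measure Ω | IsProbabilityMeasure μ ∧
        ∀ j, μ (X j) = ENNReal.ofReal (M j)}, ∑ j, μ (Xs j))
      = ∑ j, ⨅ μ ∈ {μ : Measure Ω | IsProbabilityMeasure μ ∧
        ∀ j, μ (X j) = ENNReal.ofReal (M j)}, μ (Xs j) := by
  -- Put the mass `M j` on a point of `X j` outside `Xs j` whenever there is one:
  -- this measure minimises every `μ (Xs j)` simultaneously.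
  choose x hxX hxXs using fun j => (hXne j).exists_mem_imp_subset (Xs j)
  set μ := Measure.sum fun j => ENNReal.ofReal (M j) • Measure.dirac (x j)
  have hμX : ∀ j, μ (X j) = ENNReal.ofReal (M j) := fun j => by
    rw [Measure.sum_smul_dirac_apply_of_subset hXdisj hxX _ (hXmeas j) subset_rfl,
      indicator_of_mem (hxX j)]
  have hμprob : IsProbabilityMeasure μ := ⟨by
    rw [Measure.sum_smul_dirac_apply_univ, tsum_fintype,
      ← ENNReal.ofReal_sum_of_nonneg fun j _ => hM0 j, hM1, ENNReal.ofReal_one]⟩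
  refine Finset.biInf_sum_eq_sum_biInf_of_isMinOn _ ⟨hμprob, hμX⟩ fun j _ =>
    isMinOn_iff.2 fun ν hν => ?_
  by_cases hj : x j ∈ Xs j
  · rw [(hXssub j).antisymm (hxXs j hj), hμX, hν.2]
  · rw [Measure.sum_smul_dirac_apply_of_subset hXdisj hxX _ (hXsmeas j) (hXssub j),
      indicator_of_notMem hj]
    exact zero_le

/-- OUQ under zeroth-order moment constraints: the infimum over the admissible
set of the sum of the measures of the subsets equals the sum of the infima. -/
theorem inf_sum_eq_sum_inf
    {Ω : Type*} [MeasurableSpace Ω] [MeasurableSingletonClass Ω]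
    (K : ℕ) (hK : 0 < K)
    (X : Fin K → Set Ω)
    (hXne : ∀ j, (X j).Nonempty)
    (hXmeas : ∀ j, MeasurableSet (X j))
    (hXdisj : Pairwise (Function.onFun Disjoint X))
    (hXcover : (⋃ j, X j) = Set.univ)
    (M : Fin K → ℝ) (hM0 : ∀ j, 0 ≤ M j) (hM1 : ∑ j, M j = 1)
    (Xs : Fin K → Set Ω)
    (hXsmeas : ∀ j, MeasurableSet (Xs j))
    (hXssub : ∀ j, Xs j ⊆ X j) :
    (⨅ μ ∈ {μ : Measure Ω | IsProbabilityMeasure μ ∧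
        ∀ j, μ (X j) = ENNReal.ofReal (M j)}, ∑ j, μ (Xs j))
      = ∑ j, ⨅ μ ∈ {μ : Measure Ω | IsProbabilityMeasure μ ∧
        ∀ j, μ (X j) = ENNReal.ofReal (M j)}, μ (Xs j) :=
  inf_sum_eq_sum_inf_general K X hXne hXmeas hXdisj M hM0 hM1 Xs hXsmeas hXssub
end

section
/- Let 𝒜 denote the set of probability measures μ on Ω with μ(X_j) = M_j for every j = 1,…,K, and for a fixed index j let 𝒜_j denote the set of probability measures μ on Ω satisfying only the single constraint μ(X_j) = M_j. Let X*_j be a measurable subset of Ω with X*_j ⊆ X_j. Then sup_{μ∈𝒜} μ(X*_j) = sup_{μ∈𝒜_j} μ(X*_j). -/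
/-!
Given any `μ` with `μ (X j) = M j`, keep `μ` on `X j` and replace it elsewhere by an atom of
mass `M l` at a point of each other cell `X l`. The result meets every constraint, and agrees
with `μ` on subsets of `X j`.
-/

open MeasureTheory
open scoped ENNReal

section PointMasses

variable {Ω ι : Type*} [MeasurableSpace Ω] {X : ι → Set Ω} {x : ι → Ω}

theorem dirac_apply_of_pairwiseDisjoint [DecidableEq ι] (hXmeas : ∀ l, MeasurableSet (X l))
    (hXdisj : Pairwise (Function.onFun Disjoint X)) (hx : ∀ l, x l ∈ X l) (l i : ι) :
    Measure.dirac (x l) (X i) = if l = i then 1 else 0 := by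
  rw [Measure.dirac_apply' _ (hXmeas i)]
  split_ifs with h
  · subst h
    exact Set.indicator_of_mem (hx l) _
  · exact Set.indicator_of_notMem (Set.disjoint_left.mp (hXdisj h) (hx l)) _

theorem sum_smul_dirac_apply_of_pairwiseDisjoint [DecidableEq ι]
    (hXmeas : ∀ l, MeasurableSet (X l)) (hXdisj : Pairwise (Function.onFun Disjoint X))
    (hx : ∀ l, x l ∈ X l) (s : Finset ι) (w : ι → ℝ≥0∞) (i : ι) :
    (∑ l ∈ s, w l • Measure.dirac (x l)) (X i) = if i ∈ s then w i else 0 := by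
  simp only [Measure.finsetSum_apply, Measure.smul_apply, smul_eq_mul,
    dirac_apply_of_pairwiseDisjoint hXmeas hXdisj hx, mul_ite, mul_one, mul_zero]
  exact Finset.sum_ite_eq' s i w

end PointMasses

theorem exists_isProbabilityMeasure_forall_apply_eq_restrict_le {Ω ι : Type*} [MeasurableSpace Ω]
    [Fintype ι] {X : ι → Set Ω} (hXne : ∀ l, (X l).Nonempty)
    (hXmeas : ∀ l, MeasurableSet (X l)) (hXdisj : Pairwise (Function.onFun Disjoint X))
    {w : ι → ℝ≥0∞} (hw : ∑ l, w l = 1) {μ : Measure Ω} {j : ι} (hμ : μ (X j) = w j) :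
    ∃ ν : Measure Ω, IsProbabilityMeasure ν ∧ (∀ l, ν (X l) = w l) ∧ μ.restrict (X j) ≤ ν := by
  classical
  choose x hx using hXne
  set atoms := ∑ l ∈ Finset.univ.erase j, w l • Measure.dirac (x l)
  have hatoms := sum_smul_dirac_apply_of_pairwiseDisjoint hXmeas hXdisj hx (Finset.univ.erase j) w
  refine ⟨μ.restrict (X j) + atoms, ⟨?_⟩, fun l => ?_, Measure.le_add_right le_rfl⟩
  · simp only [Measure.add_apply, Measure.restrict_apply_univ, hμ, atoms,
      Measure.finsetSum_apply, Measure.smul_apply, measure_univ, smul_eq_mul, mul_one]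
    rw [Finset.add_sum_erase _ _ (Finset.mem_univ j), hw]
  · rw [Measure.add_apply, Measure.restrict_apply' (hXmeas j), hatoms]
    by_cases hlj : l = j
    · subst hlj
      simp [hμ]
    · simp [(hXdisj hlj).inter_eq, hlj]

theorem sup_all_constraints_eq_sup_single_constraint_general
    {Ω : Type*} [MeasurableSpace Ω]
    (K : ℕ)
    (X : Fin K → Set Ω)
    (hXne : ∀ j, (X j).Nonempty)
    (hXmeas : ∀ j, MeasurableSet (X j))
    (hXdisj : Pairwise (Function.onFun Disjoint X))
    (M : Fin K → ℝ) (hM0 : ∀ j, 0 ≤ M j) (hM1 : ∑ j, M j = 1)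
    (j : Fin K) (Xs : Set Ω)
    (hXssub : Xs ⊆ X j) :
    (⨆ μ ∈ {μ : Measure Ω | IsProbabilityMeasure μ ∧
        ∀ l, μ (X l) = ENNReal.ofReal (M l)}, μ Xs)
      = ⨆ μ ∈ {μ : Measure Ω | IsProbabilityMeasure μ ∧
        μ (X j) = ENNReal.ofReal (M j)}, μ Xs := by
  refine le_antisymm (biSup_mono fun μ hμ => ⟨hμ.1, hμ.2 j⟩) (iSup₂_le fun μ hμ => ?_)
  have hw : ∑ l, ENNReal.ofReal (M l) = 1 := by
    rw [← ENNReal.ofReal_sum_of_nonneg fun l _ => hM0 l, hM1, ENNReal.ofReal_one]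
  obtain ⟨ν, hν, hνX, hμν⟩ :=
    exists_isProbabilityMeasure_forall_apply_eq_restrict_le hXne hXmeas hXdisj hw hμ.2
  calc μ Xs = μ.restrict (X j) Xs := (Measure.restrict_eq_self μ hXssub).symm
    _ ≤ ν Xs := Measure.le_iff'.mp hμν Xs
    _ ≤ _ := le_biSup (fun μ : Measure Ω => μ Xs) (⟨hν, hνX⟩ : _ ∧ _)

/-- The supremum of `μ (Xs)` over measures satisfying all the subdomain mass
constraints equals the supremum over measures satisfying only the single
constraint on the subdomain `X j` containing `Xs`. -/
theorem sup_all_constraints_eq_sup_single_constraint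
    {Ω : Type*} [MeasurableSpace Ω] [MeasurableSingletonClass Ω]
    (K : ℕ) (hK : 0 < K)
    (X : Fin K → Set Ω)
    (hXne : ∀ j, (X j).Nonempty)
    (hXmeas : ∀ j, MeasurableSet (X j))
    (hXdisj : Pairwise (Function.onFun Disjoint X))
    (hXcover : (⋃ j, X j) = Set.univ)
    (M : Fin K → ℝ) (hM0 : ∀ j, 0 ≤ M j) (hM1 : ∑ j, M j = 1)
    (j : Fin K) (Xs : Set Ω)
    (hXsmeas : MeasurableSet Xs)
    (hXssub : Xs ⊆ X j) :
    (⨆ μ ∈ {μ : Measure Ω | IsProbabilityMeasure μ ∧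
        ∀ l, μ (X l) = ENNReal.ofReal (M l)}, μ Xs)
      = ⨆ μ ∈ {μ : Measure Ω | IsProbabilityMeasure μ ∧
        μ (X j) = ENNReal.ofReal (M j)}, μ Xs :=
  sup_all_constraints_eq_sup_single_constraint_general K X hXne hXmeas hXdisj M hM0 hM1 j Xs hXssub
end

section
/- Let 𝒜 denote the set of probability measures μ on Ω with μ(X_j) = M_j for every j = 1,…,K, and let C be a measurable subset of Ω (the failure set). Then the optimal lower bound on the failure probability satisfies inf_{μ∈𝒜} μ(C) = Σ_{j=1}^K M_j · 1[X_j ⊆ C], where 1[·] denotes the indicator of the stated condition. -/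
/-!
Any admissible `μ` gives each `X j ⊆ C` its full mass `M j`, and these cells are disjoint
subsets of `C`, so `μ C` is at least the claimed sum. Conversely, putting the mass `M j` on a
single point of `X j`, chosen outside `C` whenever `X j ⊄ C`, gives an admissible measure
attaining that sum.
-/

open MeasureTheory Set
open scoped Classical ENNReal

theorem exists_mem_and_mem_iff_subset {Ω : Type*} {X : Set Ω} (hX : X.Nonempty) (C : Set Ω) :
    ∃ p ∈ X, (p ∈ C ↔ X ⊆ C) := by
  by_cases hXC : X ⊆ C
  · obtain ⟨p, hp⟩ := hX
    exact ⟨p, hp, iff_of_true (hXC hp) hXC⟩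
  · obtain ⟨p, hpX, hpC⟩ := not_subset.1 hXC
    exact ⟨p, hpX, iff_of_false hpC hXC⟩

section

variable {Ω ι : Type*} [MeasurableSpace Ω] [Fintype ι]

theorem sum_measure_of_subset_le_measure (μ : Measure Ω) {X : ι → Set Ω}
    (hXmeas : ∀ j, MeasurableSet (X j)) (hXdisj : Pairwise (Function.onFun Disjoint X))
    (C : Set Ω) : ∑ j, (if X j ⊆ C then μ (X j) else 0) ≤ μ C := by
  rw [← Finset.sum_filter,
    ← measure_biUnion_finset (fun i _ j _ hij => hXdisj hij) (fun j _ => hXmeas j)]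
  exact measure_mono (iUnion₂_subset fun j hj => (Finset.mem_filter.1 hj).2)

theorem sum_smul_dirac_apply (w : ι → ℝ≥0∞) (x : ι → Ω) {s : Set Ω} (hs : MeasurableSet s) :
    (∑ j, w j • Measure.dirac (x j)) s = ∑ j, if x j ∈ s then w j else 0 := by
  simp only [Measure.finsetSum_apply, Measure.smul_apply, Measure.dirac_apply' _ hs,
    smul_eq_mul, indicator_apply, Pi.one_apply, mul_ite, mul_one, mul_zero]

theorem sum_smul_dirac_apply_of_mem_disjoint (w : ι → ℝ≥0∞) {X : ι → Set Ω}
    (hXmeas : ∀ j, MeasurableSet (X j)) (hXdisj : Pairwise (Function.onFun Disjoint X))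
    {x : ι → Ω} (hx : ∀ j, x j ∈ X j) (i : ι) :
    (∑ j, w j • Measure.dirac (x j)) (X i) = w i := by
  rw [sum_smul_dirac_apply w x (hXmeas i), Finset.sum_eq_single_of_mem i (Finset.mem_univ i),
    if_pos (hx i)]
  intro j _ hji
  rw [if_neg fun hxi => disjoint_left.1 (hXdisj hji) (hx j) hxi]

end

theorem inf_failure_probability_general
    {Ω : Type*} [MeasurableSpace Ω]
    (K : ℕ)
    (X : Fin K → Set Ω)
    (hXne : ∀ j, (X j).Nonempty)
    (hXmeas : ∀ j, MeasurableSet (X j))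
    (hXdisj : Pairwise (Function.onFun Disjoint X))
    (M : Fin K → ℝ) (hM0 : ∀ j, 0 ≤ M j) (hM1 : ∑ j, M j = 1)
    (C : Set Ω) (hC : MeasurableSet C) :
    (⨅ μ ∈ {μ : Measure Ω | IsProbabilityMeasure μ ∧
        ∀ j, μ (X j) = ENNReal.ofReal (M j)}, μ C)
      = ∑ j, if X j ⊆ C then ENNReal.ofReal (M j) else 0 := by
  choose x hxX hxC using fun j => exists_mem_and_mem_iff_subset (hXne j) C
  set μ₀ := ∑ j, ENNReal.ofReal (M j) • Measure.dirac (x j)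
  have hμ₀ : IsProbabilityMeasure μ₀ := by
    constructor
    rw [sum_smul_dirac_apply _ _ MeasurableSet.univ]
    simp only [mem_univ, if_true]
    rw [← ENNReal.ofReal_sum_of_nonneg fun j _ => hM0 j, hM1, ENNReal.ofReal_one]
  have hμ₀X : ∀ i, μ₀ (X i) = ENNReal.ofReal (M i) :=
    sum_smul_dirac_apply_of_mem_disjoint _ hXmeas hXdisj hxX
  have hμ₀C : μ₀ C = ∑ j, if X j ⊆ C then ENNReal.ofReal (M j) else 0 := by
    simp only [μ₀, sum_smul_dirac_apply _ _ hC, hxC]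
  refine le_antisymm ((iInf₂_le μ₀ ⟨hμ₀, hμ₀X⟩).trans_eq hμ₀C) (le_iInf₂ ?_)
  rintro μ ⟨-, hμX⟩
  simpa only [hμX] using sum_measure_of_subset_le_measure μ hXmeas hXdisj C

/-- Optimal lower bound on the probability of failure under zeroth-order
moment constraints on subdomains: it equals the sum of the masses of all
subdomains entirely contained in the failure set. -/
theorem inf_failure_probability
    {Ω : Type*} [MeasurableSpace Ω] [MeasurableSingletonClass Ω]
    (K : ℕ) (hK : 0 < K)
    (X : Fin K → Set Ω)
    (hXne : ∀ j, (X j).Nonempty)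
    (hXmeas : ∀ j, MeasurableSet (X j))
    (hXdisj : Pairwise (Function.onFun Disjoint X))
    (hXcover : (⋃ j, X j) = Set.univ)
    (M : Fin K → ℝ) (hM0 : ∀ j, 0 ≤ M j) (hM1 : ∑ j, M j = 1)
    (C : Set Ω) (hC : MeasurableSet C) :
    (⨅ μ ∈ {μ : Measure Ω | IsProbabilityMeasure μ ∧
        ∀ j, μ (X j) = ENNReal.ofReal (M j)}, μ C)
      = ∑ j, if X j ⊆ C then ENNReal.ofReal (M j) else 0 :=
  inf_failure_probability_general K X hXne hXmeas hXdisj M hM0 hM1 C hC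
end
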